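/- arXiv:1912.02148 — 3 statements merged into one kernel-verified Lean document; each statement's English description precedes it below -/
import Mathlib

section
/- Let X(t,s) be a smooth two-parameter family of vector fields on a manifold M and let Φ^{t,s}_X denote its flow in the t-direction (assumed to exist for all (t,s) ∈ [0,1]²). Define the complement Y(t,s) by Y(t,s)|_{Φ^{t,s}_X(x)} := (d/du)|_{u=s} Φ^{t,u}_X(x). Then Y satisfies the variation of parameters formula Y(t,s) = (Φ^{t,s}_X)_* ∫₀^t (Φ^{u,s}_X)_*^{-1} (∂X/∂s)(u,s) du. -/
private lemma hasDerivAt_clm_apply_comp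
    {α G : Type*} [NormedAddCommGroup α] [NormedSpace ℝ α]
    {F : Type*} [NormedAddCommGroup F] [NormedSpace ℝ F]
    [NormedAddCommGroup G] [NormedSpace ℝ G]
    {D : α → F →L[ℝ] G} {D2 : α →L[ℝ] F →L[ℝ] G} {γ : ℝ → α} {γ' : α} {t : ℝ}
    (hD : HasFDerivAt D D2 (γ t)) (hγ : HasDerivAt γ γ' t) (w : F) :
    HasDerivAt (fun τ => D (γ τ) w) (D2 γ' w) t := by
  simpa using (hD.comp_hasDerivAt t hγ).clm_apply (hasDerivAt_const t w)

set_option maxHeartbeats 1000000 in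
/-- variation of parameters: Let `X(t,s)` be a smooth two-parameter family of
vector fields on `M = E`, with flow `Φ^{t,s}` in the `t`-direction (assumed globally defined),
`∂X/∂s = Xs`, and complement `Y(t,s)` defined by `(d/du)|_{u=s} Φ^{t,u}(x) = Y(t,s)|_{Φ^{t,s}(x)}`.
Then `Y(t,s) = (Φ^{t,s})_* ∫₀ᵗ (Φ^{u,s})_*⁻¹ (∂X/∂s)(u,s) du`; pointwise at `x`:
`Y t s (Φ t s x) = dΦ^{t,s}_x (∫₀ᵗ (dΦ^{u,s}_x)⁻¹ (Xs u s (Φ u s x)) du)`. -/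
theorem complement_variation_of_parameters
    {E : Type*} [NormedAddCommGroup E] [NormedSpace ℝ E] [CompleteSpace E]
    (X Xs Φ Y : ℝ → ℝ → E → E)
    (hX : ContDiff ℝ (⊤ : ℕ∞) fun p : ℝ × ℝ × E => X p.1 p.2.1 p.2.2)
    (hΦ : ContDiff ℝ (⊤ : ℕ∞) fun p : ℝ × ℝ × E => Φ p.1 p.2.1 p.2.2)
    (hΦ0 : ∀ s x, Φ 0 s x = x)
    (hflow : ∀ t s x, HasDerivAt (fun t' => Φ t' s x) (X t s (Φ t s x)) t)
    (hXs : ∀ t s x, HasDerivAt (fun σ => X t σ x) (Xs t s x) s)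
    (hY : ∀ t s x, HasDerivAt (fun u => Φ t u x) (Y t s (Φ t s x)) s)
    (hdiffeo : ∀ t s, Function.Bijective (Φ t s)) :
    ∀ t s x, t ∈ Set.Icc (0 : ℝ) 1 →
      Y t s (Φ t s x) =
        fderiv ℝ (Φ t s) x
          (∫ u in (0 : ℝ)..t,
            (fderiv ℝ (Φ u s) x).inverse (Xs u s (Φ u s x))) := by
  intro t₀ s x ht₀
  rcases subsingleton_or_nontrivial E with hE | hE
  · exact Subsingleton.elim _ _
  classical
  -- joint maps
  set Q : ℝ × E → E := fun p => Φ p.1 s p.2 with hQdef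
  set P : ℝ × ℝ → E := fun p => Φ p.1 p.2 x with hPdef
  set Xj : ℝ × ℝ × E → E := fun p => X p.1 p.2.1 p.2.2 with hXjdef
  have hQcd : ContDiff ℝ (⊤ : ℕ∞) Q := hΦ.comp (f := fun p : ℝ × E => (p.1, s, p.2)) (ContDiff.prodMk contDiff_fst (ContDiff.prodMk contDiff_const contDiff_snd))
  have hPcd : ContDiff ℝ (⊤ : ℕ∞) P := hΦ.comp (f := fun p : ℝ × ℝ => (p.1, p.2, x)) (ContDiff.prodMk contDiff_fst (ContDiff.prodMk contDiff_snd contDiff_const))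
  set DQ := fderiv ℝ Q with hDQdef
  set DP := fderiv ℝ P with hDPdef
  set DX := fderiv ℝ Xj with hDXdef
  have hDQ : ∀ p, HasFDerivAt Q (DQ p) p := fun p => (hQcd.differentiable (by simp) p).hasFDerivAt
  have hDP : ∀ p, HasFDerivAt P (DP p) p := fun p => (hPcd.differentiable (by simp) p).hasFDerivAt
  have hDX : ∀ p, HasFDerivAt Xj (DX p) p := fun p => (hX.differentiable (by simp) p).hasFDerivAt
  have hDQcd : ContDiff ℝ (⊤ : ℕ∞) DQ := hQcd.fderiv_right (by simp)
  have hDPcd : ContDiff ℝ (⊤ : ℕ∞) DP := hPcd.fderiv_right (by simp)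
  have hDXcd : ContDiff ℝ (⊤ : ℕ∞) DX := hX.fderiv_right (by simp)
  have hDQ2 : ∀ p, HasFDerivAt DQ (fderiv ℝ DQ p) p :=
    fun p => (hDQcd.differentiable (by simp) p).hasFDerivAt
  have hDP2 : ∀ p, HasFDerivAt DP (fderiv ℝ DP p) p :=
    fun p => (hDPcd.differentiable (by simp) p).hasFDerivAt
  set inR : E →L[ℝ] ℝ × E := ContinuousLinearMap.inr ℝ ℝ E with hinRdef
  set inE : E →L[ℝ] ℝ × ℝ × E :=
    (ContinuousLinearMap.inr ℝ ℝ (ℝ × E)).comp (ContinuousLinearMap.inr ℝ ℝ E) with hinEdef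
  set W : ℝ → E →L[ℝ] E := fun u => (DQ (u, x)).comp inR with hWdef
  set A : ℝ → E →L[ℝ] E := fun u => (DX (u, s, Φ u s x)).comp inE with hAdef
  set bb : ℝ → E := fun u => Xs u s (Φ u s x) with hbbdef
  set f : ℝ → E := fun u => Y u s (Φ u s x) with hfdef
  -- embedding curve derivative
  have hcurve : ∀ u : ℝ, HasFDerivAt (fun y : E => (u, y)) inR x := by
    intro u
    have h : HasFDerivAt (fun y : E => (u, y))
        ((0 : E →L[ℝ] ℝ).prod (ContinuousLinearMap.id ℝ E)) x :=
      HasFDerivAt.prodMk (hasFDerivAt_const u x) (hasFDerivAt_id x)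
    convert h using 1
    all_goals ext v <;> simp [hinRdef]
  have hQW : ∀ u : ℝ, HasFDerivAt (fun y => Q (u, y)) (W u) x := by
    intro u
    simpa [Function.comp_def] using (hDQ (u, x)).comp x (hcurve u)
  have hWfd : ∀ u : ℝ, HasFDerivAt (Φ u s) (W u) x := by
    intro u
    have h := hQW u
    simpa [hQdef] using h
  -- partial derivative identification lemmas
  have hDQ10 : ∀ p : ℝ × E, DQ p ((1:ℝ), (0:E)) = X p.1 s (Φ p.1 s p.2) := by
    intro p
    have h1 : HasDerivAt (fun τ => Q (τ, p.2)) (DQ p ((1:ℝ), (0:E))) p.1 := by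
      simpa [Function.comp_def] using
        (hDQ p).comp_hasDerivAt p.1 (HasDerivAt.prodMk (hasDerivAt_id p.1) (hasDerivAt_const p.1 p.2))
    exact h1.unique (by simpa [hQdef] using hflow p.1 s p.2)
  have hDP10 : ∀ p : ℝ × ℝ, DP p ((1:ℝ), (0:ℝ)) = X p.1 p.2 (Φ p.1 p.2 x) := by
    intro p
    have h1 : HasDerivAt (fun τ => P (τ, p.2)) (DP p ((1:ℝ), (0:ℝ))) p.1 := by
      simpa [Function.comp_def] using
        (hDP p).comp_hasDerivAt p.1 (HasDerivAt.prodMk (hasDerivAt_id p.1) (hasDerivAt_const p.1 p.2))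
    exact h1.unique (by simpa [hPdef] using hflow p.1 p.2 x)
  have hDP01 : ∀ p : ℝ × ℝ, DP p ((0:ℝ), (1:ℝ)) = Y p.1 p.2 (Φ p.1 p.2 x) := by
    intro p
    have h1 : HasDerivAt (fun σ => P (p.1, σ)) (DP p ((0:ℝ), (1:ℝ))) p.2 := by
      simpa [Function.comp_def] using
        (hDP p).comp_hasDerivAt p.2 (HasDerivAt.prodMk (hasDerivAt_const p.2 p.1) (hasDerivAt_id p.2))
    exact h1.unique (by simpa [hPdef] using hY p.1 p.2 x)
  have hDX010 : ∀ p : ℝ × ℝ × E, DX p ((0:ℝ), (1:ℝ), (0:E)) = Xs p.1 p.2.1 p.2.2 := by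
    intro p
    have h1 : HasDerivAt (fun σ => Xj (p.1, σ, p.2.2)) (DX p ((0:ℝ), (1:ℝ), (0:E))) p.2.1 := by
      simpa [Function.comp_def] using
        (hDX p).comp_hasDerivAt p.2.1
          (HasDerivAt.prodMk (hasDerivAt_const p.2.1 p.1)
            (HasDerivAt.prodMk (hasDerivAt_id p.2.1) (hasDerivAt_const p.2.1 p.2.2)))
    exact h1.unique (by simpa [hXjdef] using hXs p.1 p.2.1 p.2.2)
  -- the linearized flow ODE : W' = A ∘ W
  have hW' : ∀ t : ℝ, HasDerivAt W ((A t).comp (W t)) t := by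
    intro t
    have hD2 := hDQ2 (t, x)
    set D2 := fderiv ℝ DQ (t, x) with hD2def
    have ha : HasDerivAt (fun τ => DQ (τ, x)) (D2 ((1:ℝ), (0:E))) t := by
      simpa [Function.comp_def] using
        hD2.comp_hasDerivAt t (HasDerivAt.prodMk (hasDerivAt_id t) (hasDerivAt_const t x))
    have hb : HasDerivAt W ((D2 ((1:ℝ), (0:E))).comp inR) t := by
      have hφ := ((ContinuousLinearMap.compL ℝ E (ℝ × E) E).flip inR).hasFDerivAt
        (x := DQ (t, x))
      have h := hφ.comp_hasDerivAt t ha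
      simpa [Function.comp_def] using h
    have key : (D2 ((1:ℝ), (0:E))).comp inR = (A t).comp (W t) := by
      ext v
      have h1 : HasFDerivAt (fun y : E => DQ (t, y) ((1:ℝ), (0:E)))
          ((D2.comp inR).flip ((1:ℝ), (0:E))) x := by
        simpa using (hD2.comp x (hcurve t)).clm_apply
          (hasFDerivAt_const ((1:ℝ), (0:E)) x)
      have hmap : HasFDerivAt (fun y : E => ((t : ℝ), (s, Q (t, y)))) (inE.comp (W t)) x := by
        have hp := HasFDerivAt.prodMk (hasFDerivAt_const t x) (HasFDerivAt.prodMk (hasFDerivAt_const s x) (hQW t))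
        convert hp using 1
        all_goals ext w <;> simp [hinEdef]
      have h2 : HasFDerivAt (fun y : E => Xj (t, s, Q (t, y)))
          ((DX (t, s, Φ t s x)).comp (inE.comp (W t))) x := by
        have h := (hDX (t, s, Φ t s x)).comp x hmap
        simpa [Function.comp_def] using h
      have heq : (fun y : E => DQ (t, y) ((1:ℝ), (0:E))) =
          fun y : E => Xj (t, s, Q (t, y)) := by
        funext y
        rw [hDQ10 (t, y)]
      rw [heq] at h1
      have huniq := h1.unique h2
      have e1 : ((D2 ((1:ℝ), (0:E))).comp inR) v = D2 ((1:ℝ), (0:E)) ((0:ℝ), v) := by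
        simp [hinRdef]
      have e2 : D2 ((1:ℝ), (0:E)) ((0:ℝ), v) = D2 ((0:ℝ), v) ((1:ℝ), (0:E)) :=
        second_derivative_symmetric hDQ hD2 _ _
      have e3 : D2 ((0:ℝ), v) ((1:ℝ), (0:E)) = ((D2.comp inR).flip ((1:ℝ), (0:E))) v := by
        simp [hinRdef]
      rw [e1, e2, e3, huniq]
      simp [hAdef]
    rw [← key]
    exact hb
  -- the complement ODE : f' = bb + A f
  have hf' : ∀ t : ℝ, HasDerivAt f (bb t + (A t) (f t)) t := by
    intro t
    have hD2 := hDP2 (t, s)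
    set D2 := fderiv ℝ DP (t, s) with hD2def
    have hfeq : f = fun τ => DP (τ, s) ((0:ℝ), (1:ℝ)) := by
      funext τ
      rw [hDP01 (τ, s)]
    have h1 : HasDerivAt (fun τ => DP (τ, s) ((0:ℝ), (1:ℝ)))
        (D2 ((1:ℝ), (0:ℝ)) ((0:ℝ), (1:ℝ))) t := by
      have ha : HasDerivAt (fun τ => DP (τ, s)) (D2 ((1:ℝ), (0:ℝ))) t := by
        simpa [Function.comp_def] using
          hD2.comp_hasDerivAt t (HasDerivAt.prodMk (hasDerivAt_id t) (hasDerivAt_const t s))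
      simpa using ha.clm_apply (hasDerivAt_const t ((0:ℝ), (1:ℝ)))
    rw [← hfeq] at h1
    have h2 : HasDerivAt (fun σ => DP (t, σ) ((1:ℝ), (0:ℝ)))
        (D2 ((0:ℝ), (1:ℝ)) ((1:ℝ), (0:ℝ))) s := by
      have ha : HasDerivAt (fun σ => DP (t, σ)) (D2 ((0:ℝ), (1:ℝ))) s := by
        simpa [Function.comp_def] using
          hD2.comp_hasDerivAt s (HasDerivAt.prodMk (hasDerivAt_const s t) (hasDerivAt_id s))
      simpa using ha.clm_apply (hasDerivAt_const s ((1:ℝ), (0:ℝ)))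
    have h3 : HasDerivAt (fun σ => Xj (t, σ, P (t, σ))) (bb t + (A t) (f t)) s := by
      have hmap : HasDerivAt (fun σ : ℝ => ((t : ℝ), (σ, P (t, σ)))) ((0:ℝ), (1:ℝ), f t) s :=
        HasDerivAt.prodMk (hasDerivAt_const s t)
          (HasDerivAt.prodMk (hasDerivAt_id s) (by simpa [hPdef, hfdef] using hY t s x))
      have h := (hDX (t, s, Φ t s x)).comp_hasDerivAt s hmap
      have hval : DX (t, s, Φ t s x) ((0:ℝ), (1:ℝ), f t) = bb t + (A t) (f t) := by
        have hsplit : ((0:ℝ), (1:ℝ), f t) = ((0:ℝ), (1:ℝ), (0:E)) + ((0:ℝ), (0:ℝ), f t) := by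
          simp
        rw [hsplit, map_add, hDX010 (t, s, Φ t s x)]
        simp [hbbdef, hAdef, hinEdef]
      rw [hval] at h
      simpa [Function.comp_def] using h
    have heq2 : (fun σ => DP (t, σ) ((1:ℝ), (0:ℝ))) = fun σ => Xj (t, σ, P (t, σ)) := by
      funext σ
      rw [hDP10 (t, σ)]
    rw [heq2] at h2
    have huniq := h2.unique h3
    have hsym : D2 ((1:ℝ), (0:ℝ)) ((0:ℝ), (1:ℝ)) = D2 ((0:ℝ), (1:ℝ)) ((1:ℝ), (0:ℝ)) :=
      second_derivative_symmetric hDP hD2 _ _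
    rw [hsym, huniq] at h1
    exact h1
  have hf0 : f 0 = 0 := by
    have h := hY 0 s x
    have hconst : (fun u => Φ 0 u x) = fun _ => x := funext fun u => hΦ0 u x
    rw [hconst] at h
    have := h.unique (hasDerivAt_const s x)
    simpa [hfdef] using this
  have hW0 : W 0 = 1 := by
    have h := hWfd 0
    have hid : (Φ 0 s) = id := funext fun y => hΦ0 s y
    rw [hid] at h
    rw [ContinuousLinearMap.one_def]
    exact h.unique (hasFDerivAt_id x)
  -- continuity
  have hWcont : Continuous W := by
    have h1 : Continuous fun u : ℝ => DQ (u, x) :=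
      hDQcd.continuous.comp (continuous_id.prodMk continuous_const)
    exact h1.clm_comp continuous_const
  have hΦxc : Continuous fun u : ℝ => Φ u s x :=
    hΦ.continuous.comp (continuous_id.prodMk (continuous_const.prodMk continuous_const))
  have hAc : Continuous A := by
    have h1 : Continuous fun u : ℝ => DX (u, s, Φ u s x) :=
      hDXcd.continuous.comp (continuous_id.prodMk (continuous_const.prodMk hΦxc))
    exact h1.clm_comp continuous_const
  have hbbc : Continuous bb := by
    have hrw : bb = fun u => DX (u, s, Φ u s x) ((0:ℝ), (1:ℝ), (0:E)) :=
      funext fun u => (hDX010 (u, s, Φ u s x)).symm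
    rw [hrw]
    exact (hDXcd.continuous.comp
      (continuous_id.prodMk (continuous_const.prodMk hΦxc))).clm_apply continuous_const
  obtain ⟨C, hC⟩ :=
    (isCompact_Icc (a := (0:ℝ)) (b := 1)).exists_bound_of_continuousOn hAc.continuousOn
  set K := max C 0 with hKdef
  have hK0 : (0:ℝ) ≤ K := le_max_right _ _
  have hKA : ∀ u ∈ Set.Icc (0:ℝ) 1, ‖A u‖ ≤ K := fun u hu => (hC u hu).trans (le_max_left _ _)
  -- inverse of W
  set V : ℝ → E →L[ℝ] E := fun u => Ring.inverse (W u) with hVdef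
  have hV' : ∀ u : ℝ, IsUnit (W u) → HasDerivAt V (-((V u).comp (A u))) u := by
    intro u hu
    obtain ⟨w, hw⟩ := hu
    have hinv := hasFDerivAt_ringInverse (𝕜 := ℝ) w
    rw [hw] at hinv
    have h := hinv.comp_hasDerivAt u (hW' u)
    have hVu : V u = (↑w⁻¹ : E →L[ℝ] E) := by
      simp [hVdef, ← hw]
    refine h.congr_deriv ?_
    symm
    simp only [ContinuousLinearMap.neg_apply, ContinuousLinearMap.mulLeftRight_apply]
    rw [hVu]
    have hWu : W u = (↑w : E →L[ℝ] E) := hw.symm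
    rw [show (A u).comp (W u) = (A u) * (W u) from rfl,
      show ((↑w⁻¹ : E →L[ℝ] E)).comp (A u) = (↑w⁻¹ : E →L[ℝ] E) * (A u) from rfl, hWu,
      ← mul_assoc, mul_assoc ((↑w⁻¹ : E →L[ℝ] E) * A u), Units.mul_inv, mul_one]
  have hVbound : ∀ r ∈ Set.Icc (0:ℝ) 1, (∀ u ∈ Set.Icc (0:ℝ) r, IsUnit (W u)) →
      ∀ u ∈ Set.Icc (0:ℝ) r, ‖V u‖ ≤ Real.exp (K * u) := by
    intro r hr hunits
    have hcont : ContinuousOn V (Set.Icc 0 r) := by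
      intro u hu
      have h := NormedRing.inverse_continuousAt (hunits u hu).unit
      rw [IsUnit.unit_spec] at h
      exact (h.comp hWcont.continuousAt).continuousWithinAt
    have key := norm_le_gronwallBound_of_norm_deriv_right_le (f := V)
      (f' := fun u => -((V u).comp (A u))) (δ := 1) (K := K) (ε := 0) (a := 0) (b := r)
      hcont
      (fun u hu => ((hV' u (hunits u ⟨hu.1, hu.2.le⟩)).hasDerivWithinAt))
      (by
        simp only [hVdef, hW0, Ring.inverse_one]
        exact ContinuousLinearMap.norm_id_le.trans (by norm_num))
      (by
        intro u hu
        have hA : ‖A u‖ ≤ K := hKA u ⟨hu.1, hu.2.le.trans hr.2⟩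
        calc ‖-((V u).comp (A u))‖ = ‖(V u).comp (A u)‖ := norm_neg _
          _ ≤ ‖V u‖ * ‖A u‖ := ContinuousLinearMap.opNorm_comp_le _ _
          _ ≤ ‖V u‖ * K := by
              exact mul_le_mul_of_nonneg_left hA (norm_nonneg _)
          _ ≤ K * ‖V u‖ + 0 := by rw [mul_comm, add_zero])
    intro u hu
    have := key u hu
    rwa [gronwallBound_ε0, sub_zero, one_mul] at this
  -- W is everywhere a unit on [0,1]
  haveI : Nontrivial (E →L[ℝ] E) := ⟨0, 1, by
    intro h
    obtain ⟨y, hy⟩ := exists_ne (0 : E)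
    have := congrArg (fun L : E →L[ℝ] E => L y) h
    simp at this
    exact hy this.symm⟩
  set S := {r : ℝ | r ∈ Set.Icc (0:ℝ) 1 ∧ ∀ u ∈ Set.Icc (0:ℝ) r, IsUnit (W u)} with hSdef
  have h0S : (0:ℝ) ∈ S := by
    refine ⟨⟨le_refl 0, zero_le_one⟩, ?_⟩
    intro u hu
    have : u = 0 := le_antisymm hu.2 hu.1
    rw [this, hW0]
    exact isUnit_one
  have hSne : S.Nonempty := ⟨0, h0S⟩
  have hSbdd : BddAbove S := ⟨1, fun r hr => hr.1.2⟩
  set T := sSup S with hTdef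
  have hT0 : 0 ≤ T := le_csSup hSbdd h0S
  have hT1 : T ≤ 1 := csSup_le hSne fun r hr => hr.1.2
  have hbelow : ∀ u : ℝ, 0 ≤ u → u < T → IsUnit (W u) := by
    intro u hu0 huT
    obtain ⟨r, hrS, hur⟩ := exists_lt_of_lt_csSup hSne huT
    exact hrS.2 u ⟨hu0, hur.le⟩
  have hWT : IsUnit (W T) := by
    rcases eq_or_lt_of_le hT0 with h | h
    · rw [← h, hW0]; exact isUnit_one
    · obtain ⟨δ, hδ0, hδ⟩ := Metric.continuousAt_iff.mp hWcont.continuousAt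
        (Real.exp K)⁻¹ (by positivity)
      set η := min δ T with hηdef
      have hη0 : 0 < η := lt_min hδ0 h
      obtain ⟨r, hrS, hr1⟩ := exists_lt_of_lt_csSup hSne
        (show T - η / 2 < T by linarith)
      have hrT : r ≤ T := le_csSup hSbdd hrS
      have hr0 : 0 < r := by
        have : η ≤ T := min_le_right _ _
        linarith
      have hru : IsUnit (W r) := hrS.2 r ⟨hr0.le, le_refl r⟩
      have hdist : dist r T < δ := by
        rw [Real.dist_eq, abs_of_nonpos (by linarith)]
        have : η ≤ δ := min_le_left _ _
        linarith
      have hWdist : ‖W T - W r‖ < (Real.exp K)⁻¹ := by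
        have := hδ hdist
        rwa [dist_eq_norm, norm_sub_rev] at this
      have hwinv : ‖((hru.unit⁻¹ : (E →L[ℝ] E)ˣ) : E →L[ℝ] E)‖ ≤ Real.exp K := by
        have hb := hVbound r ⟨hr0.le, hrS.1.2⟩ hrS.2 r ⟨hr0.le, le_refl r⟩
        have hVr : V r = ((hru.unit⁻¹ : (E →L[ℝ] E)ˣ) : E →L[ℝ] E) := by
          show Ring.inverse (W r) = _
          conv_lhs => rw [show W r = ((hru.unit : (E →L[ℝ] E)ˣ) : E →L[ℝ] E) from
            (IsUnit.unit_spec hru).symm]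
          exact Ring.inverse_unit hru.unit
        rw [hVr] at hb
        refine hb.trans (Real.exp_le_exp.mpr ?_)
        calc K * r ≤ K * 1 := mul_le_mul_of_nonneg_left hrS.1.2 hK0
          _ = K := mul_one K
      have hpos : 0 < ‖((hru.unit⁻¹ : (E →L[ℝ] E)ˣ) : E →L[ℝ] E)‖ := Units.norm_pos _
      have hnear : ‖W T - ↑hru.unit‖ < ‖((hru.unit⁻¹ : (E →L[ℝ] E)ˣ) : E →L[ℝ] E)‖⁻¹ := by
        have h2 : (Real.exp K)⁻¹ ≤ ‖((hru.unit⁻¹ : (E →L[ℝ] E)ˣ) : E →L[ℝ] E)‖⁻¹ := by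
          have := one_div_le_one_div_of_le hpos hwinv
          rwa [one_div, one_div] at this
        calc ‖W T - ↑hru.unit‖ = ‖W T - W r‖ := by rw [IsUnit.unit_spec]
          _ < (Real.exp K)⁻¹ := hWdist
          _ ≤ _ := h2
      exact ⟨Units.ofNearby hru.unit (W T) hnear, by simp [Units.ofNearby]⟩
  have hTS : T ∈ S := by
    refine ⟨⟨hT0, hT1⟩, ?_⟩
    intro u hu
    rcases lt_or_eq_of_le hu.2 with h | h
    · exact hbelow u hu.1 h
    · rw [h]; exact hWT
  have hT_eq : T = 1 := by
    by_contra hne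
    have hTlt : T < 1 := lt_of_le_of_ne hT1 hne
    have hopen : IsOpen (W ⁻¹' {L : E →L[ℝ] E | IsUnit L}) := Units.isOpen.preimage hWcont
    obtain ⟨ε, hε0, hball⟩ := Metric.isOpen_iff.mp hopen T hWT
    set r := min 1 (T + ε / 2) with hrdef
    have hrS : r ∈ S := by
      refine ⟨⟨le_min zero_le_one (by linarith), min_le_left _ _⟩, ?_⟩
      intro u hu
      rcases le_or_gt u T with h | h
      · exact hTS.2 u ⟨hu.1, h⟩
      · refine hball ?_
        rw [Metric.mem_ball, Real.dist_eq, abs_of_pos (by linarith)]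
        have : u ≤ T + ε / 2 := hu.2.trans (min_le_right _ _)
        linarith
    have h1 : r ≤ T := le_csSup hSbdd hrS
    have h2 : T < r := lt_min hTlt (by linarith)
    linarith
  have hunits : ∀ u ∈ Set.Icc (0:ℝ) 1, IsUnit (W u) := by
    have := hTS.2
    rwa [hT_eq] at this
  -- the candidate solution F
  set O := W ⁻¹' {L : E →L[ℝ] E | IsUnit L} with hOdef
  have hOopen : IsOpen O := Units.isOpen.preimage hWcont
  have hIccO : Set.Icc (0:ℝ) 1 ⊆ O := fun u hu => hunits u hu
  have hVcO : ContinuousOn V O := by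
    intro u hu
    have h := NormedRing.inverse_continuousAt (show IsUnit (W u) from hu).unit
    rw [IsUnit.unit_spec] at h
    exact (h.comp hWcont.continuousAt).continuousWithinAt
  set c : ℝ → E := fun u => V u (bb u) with hcdef
  have hcO : ContinuousOn c O := hVcO.clm_apply hbbc.continuousOn
  have hInt : ∀ t ∈ Set.Icc (0:ℝ) 1, HasDerivAt (fun τ => ∫ u in (0:ℝ)..τ, c u) (c t) t := by
    intro t ht
    apply intervalIntegral.integral_hasDerivAt_right
    · apply (hcO.mono ?_).intervalIntegrable
      rw [Set.uIcc_of_le ht.1]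
      exact (Set.Icc_subset_Icc le_rfl ht.2).trans hIccO
    · exact ⟨O, hOopen.mem_nhds (hIccO ht), hcO.aestronglyMeasurable hOopen.measurableSet⟩
    · exact hcO.continuousAt (hOopen.mem_nhds (hIccO ht))
  set F : ℝ → E := fun t => (W t) (∫ u in (0:ℝ)..t, c u) with hFdef
  have hF' : ∀ t ∈ Set.Icc (0:ℝ) 1, HasDerivAt F (bb t + (A t) (F t)) t := by
    intro t ht
    have h := (hW' t).clm_apply (hInt t ht)
    have h2 : (W t) (c t) = bb t := by
      have hu := hunits t ht
      have hone : (W t).comp (V t) = 1 := by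
        rw [hVdef]
        exact Ring.mul_inverse_cancel _ hu
      calc (W t) (c t) = ((W t).comp (V t)) (bb t) := by simp [hcdef]
        _ = (1 : E →L[ℝ] E) (bb t) := by rw [hone]
        _ = bb t := rfl
    simp only [ContinuousLinearMap.comp_apply] at h
    rw [h2] at h
    simpa [hFdef, add_comm] using h
  have hF0 : F 0 = 0 := by simp [hFdef]
  -- uniqueness of solutions of the linear ODE
  set pr : ℝ → ℝ := fun u => max 0 (min u 1) with hprdef
  have hprmem : ∀ u, pr u ∈ Set.Icc (0:ℝ) 1 :=
    fun u => ⟨le_max_left _ _, max_le zero_le_one (min_le_right _ _)⟩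
  have hpreq : ∀ u : ℝ, 0 ≤ u → u ≤ 1 → pr u = u := by
    intro u h0 h1
    rw [hprdef]
    simp [min_eq_left h1, max_eq_right h0]
  set vf : ℝ → E → E := fun u z => bb (pr u) + (A (pr u)) z with hvfdef
  have hlip : ∀ u, LipschitzOnWith K.toNNReal (vf u) Set.univ := by
    intro u
    apply LipschitzWith.lipschitzOnWith
    have h := (A (pr u)).lipschitz
    have hle : ‖A (pr u)‖₊ ≤ K.toNNReal := by
      have := hKA _ (hprmem u)
      rw [← NNReal.coe_le_coe]
      rw [coe_nnnorm, Real.coe_toNNReal K hK0]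
      exact this
    have h2 : LipschitzWith K.toNNReal fun z => (A (pr u)) z := h.weaken hle
    simpa using (LipschitzWith.const (bb (pr u))).add h2
  have hfC : ContinuousOn f (Set.Icc (0:ℝ) t₀) :=
    fun u _ => (hf' u).continuousAt.continuousWithinAt
  have hfD : ∀ u ∈ Set.Ico (0:ℝ) t₀, HasDerivWithinAt f (vf u (f u)) (Set.Ici u) u := by
    intro u hu
    have h := (hf' u).hasDerivWithinAt (s := Set.Ici u)
    have : vf u (f u) = bb u + (A u) (f u) := by
      rw [hvfdef]
      simp only
      rw [hpreq u hu.1 (hu.2.le.trans ht₀.2)]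
    rwa [this]
  have hgC : ContinuousOn F (Set.Icc (0:ℝ) t₀) := by
    intro u hu
    exact (hF' u ⟨hu.1, hu.2.trans ht₀.2⟩).continuousAt.continuousWithinAt
  have hgD : ∀ u ∈ Set.Ico (0:ℝ) t₀, HasDerivWithinAt F (vf u (F u)) (Set.Ici u) u := by
    intro u hu
    have h := (hF' u ⟨hu.1, hu.2.le.trans ht₀.2⟩).hasDerivWithinAt (s := Set.Ici u)
    have : vf u (F u) = bb u + (A u) (F u) := by
      rw [hvfdef]
      simp only
      rw [hpreq u hu.1 (hu.2.le.trans ht₀.2)]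
    rwa [this]
  have huniq := ODE_solution_unique_of_mem_Icc_right (fun u _ => hlip u) hfC hfD
    (fun _ _ => Set.mem_univ _) hgC hgD (fun _ _ => Set.mem_univ _)
    (by rw [hf0, hF0])
  have hfinal : f t₀ = F t₀ := huniq ⟨ht₀.1, le_refl t₀⟩
  -- rewrite into the required form
  have hWeq : ∀ u, fderiv ℝ (Φ u s) x = W u := fun u => (hWfd u).fderiv
  have hinv_eq : ∀ u, (fderiv ℝ (Φ u s) x).inverse = V u := by
    intro u
    rw [hWeq u, hVdef]
    exact (congrFun ContinuousLinearMap.ringInverse_eq_inverse (W u)).symm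
  calc Y t₀ s (Φ t₀ s x) = f t₀ := rfl
    _ = F t₀ := hfinal
    _ = (W t₀) (∫ u in (0:ℝ)..t₀, c u) := rfl
    _ = fderiv ℝ (Φ t₀ s) x
          (∫ u in (0:ℝ)..t₀, (fderiv ℝ (Φ u s) x).inverse (Xs u s (Φ u s x))) := by
        have hint : (∫ u in (0:ℝ)..t₀, c u)
            = ∫ u in (0:ℝ)..t₀, (fderiv ℝ (Φ u s) x).inverse (Xs u s (Φ u s x)) := by
          apply intervalIntegral.integral_congr
          intro u _
          show c u = (fderiv ℝ (Φ u s) x).inverse (Xs u s (Φ u s x))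
          rw [hinv_eq u]
        rw [hint, hWeq t₀]
end

section
/- Let α(t,s) be a smooth two-parameter family of vector fields on M with flow Φ^{t,s}_α in the t-direction, and define β(t,s) := (d/ds)Φ^{t,s}_α (transported back to a vector field, i.e. β(t,s)|_{Φ^{t,s}_α(x)} = (d/du)|_{u=s}Φ^{t,u}_α(x)). Then β satisfies ∂α/∂s − ∂β/∂t = [α, β] and β(0,s) = 0. -/
open ContinuousLinearMap

lemma chain_aux {E : Type*} [NormedAddCommGroup E] [NormedSpace ℝ E]
    (G Gt : ℝ → E → E) (c : ℝ → E) (v : E) (r : ℝ)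
    (hG : ContDiff ℝ (⊤ : ℕ∞) fun p : ℝ × E => G p.1 p.2)
    (hGt : ∀ r y, HasDerivAt (fun r' => G r' y) (Gt r y) r)
    (hc : HasDerivAt c v r) :
    HasDerivAt (fun r' => G r' (c r'))
      (Gt r (c r) + fderiv ℝ (G r) (c r) v) r := by
  have hL : HasFDerivAt (fun p : ℝ × E => G p.1 p.2)
      (fderiv ℝ (fun p : ℝ × E => G p.1 p.2) (r, c r)) (r, c r) :=
    (hG.differentiable (by simp) (r, c r)).hasFDerivAt
  set L := fderiv ℝ (fun p : ℝ × E => G p.1 p.2) (r, c r) with hLdef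
  have hγ : HasDerivAt (fun r' => (r', c r')) ((1 : ℝ), v) r :=
    (hasDerivAt_id r).prodMk hc
  have hmain : HasDerivAt (fun r' => G r' (c r')) (L (1, v)) r :=
    by have h := hL.comp_hasDerivAt r hγ; exact h
  have h10 : L (1, 0) = Gt r (c r) := by
    have h1 : HasDerivAt (fun t => G t (c r)) (L (1, 0)) r :=
      by have h := hL.comp_hasDerivAt r ((hasDerivAt_id r).prodMk (hasDerivAt_const r (c r))); exact h
    exact h1.unique (hGt r (c r))
  have h0v : fderiv ℝ (G r) (c r) v = L (0, v) := by
    have h2 : HasFDerivAt (fun y => G r y) (L.comp (inr ℝ ℝ E)) (c r) :=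
      hL.comp (c r) (hasFDerivAt_prodMk_right r (c r))
    have := h2.fderiv
    rw [show (fun y => G r y) = G r from rfl] at this
    rw [this]; rfl
  have : ((1 : ℝ), v) = ((1 : ℝ), (0 : E)) + ((0 : ℝ), v) := by simp
  rw [this, L.map_add, h10] at hmain
  rwa [h0v]

/-- Let `α(t,s)` be a smooth two-parameter family of vector fields on `M = E`
with flow `Φ^{t,s}` in the `t`-direction, and let `β(t,s)` be its complement, defined by
`β(t,s)|_{Φ^{t,s}(x)} = (d/du)|_{u=s} Φ^{t,u}(x)`.  Then `∂α/∂s − ∂β/∂t = [α, β]` (where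
`[α,β](x) = Dβ_x(α(x)) − Dα_x(β(x))` is the Lie bracket of vector fields) and `β(0,s) = 0`. -/
theorem complement_satisfies_A_homotopy_equation
    {E : Type*} [NormedAddCommGroup E] [NormedSpace ℝ E]
    (α αs β βt Φ : ℝ → ℝ → E → E)
    (hα : ContDiff ℝ (⊤ : ℕ∞) fun p : ℝ × ℝ × E => α p.1 p.2.1 p.2.2)
    (hΦ : ContDiff ℝ (⊤ : ℕ∞) fun p : ℝ × ℝ × E => Φ p.1 p.2.1 p.2.2)
    (hΦ0 : ∀ s x, Φ 0 s x = x)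
    (hflow : ∀ t s x, HasDerivAt (fun t' => Φ t' s x) (α t s (Φ t s x)) t)
    (hβ : ∀ t s x, HasDerivAt (fun u => Φ t u x) (β t s (Φ t s x)) s)
    (hsurj : ∀ t s, Function.Surjective (Φ t s))
    (hβsmooth : ContDiff ℝ (⊤ : ℕ∞) fun p : ℝ × ℝ × E => β p.1 p.2.1 p.2.2)
    (hαs : ∀ t s x, HasDerivAt (fun σ => α t σ x) (αs t s x) s)
    (hβt : ∀ t s x, HasDerivAt (fun τ => β τ s x) (βt t s x) t) :
    (∀ t s x, αs t s x - βt t s x =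
        fderiv ℝ (β t s) x (α t s x) - fderiv ℝ (α t s) x (β t s x)) ∧
      ∀ s x, β 0 s x = 0 := by
  constructor
  · intro t s y
    obtain ⟨x, hx⟩ := hsurj t s y
    -- f : ℝ × ℝ → E, the flow with fixed x
    set f : ℝ × ℝ → E := fun p => Φ p.1 p.2 x with hfdef
    have hf : ContDiff ℝ (⊤ : ℕ∞) f := by
      exact hΦ.comp (ContDiff.prodMk contDiff_fst (ContDiff.prodMk contDiff_snd contDiff_const))
    have hfd : ContDiff ℝ (⊤ : ℕ∞) (fderiv ℝ f) := hf.fderiv_right (by simp)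
    -- first partials
    have hA : ∀ q : ℝ × ℝ, fderiv ℝ f q ((1 : ℝ), (0 : ℝ)) = α q.1 q.2 (f q) := by
      intro q
      have h1 : HasDerivAt (fun t' => f (t', q.2)) (fderiv ℝ f q (1, 0)) q.1 :=
        by have h := (hf.differentiable (by simp) (q.1, q.2)).hasFDerivAt.comp_hasDerivAt q.1
             ((hasDerivAt_id q.1).prodMk (hasDerivAt_const q.1 q.2)); exact h
      exact h1.unique (hflow q.1 q.2 x)
    have hB : ∀ q : ℝ × ℝ, fderiv ℝ f q ((0 : ℝ), (1 : ℝ)) = β q.1 q.2 (f q) := by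
      intro q
      have h1 : HasDerivAt (fun u => f (q.1, u)) (fderiv ℝ f q (0, 1)) q.2 :=
        by have h := (hf.differentiable (by simp) (q.1, q.2)).hasFDerivAt.comp_hasDerivAt q.2
             ((hasDerivAt_const q.2 q.1).prodMk (hasDerivAt_id q.2)); exact h
      exact h1.unique (hβ q.1 q.2 x)
    set p : ℝ × ℝ := (t, s) with hpdef
    set F2 := fderiv ℝ (fderiv ℝ f) with hF2def
    -- mixed partial 1 : d/dt of (d/ds f) = βt + Dβ(α)
    have hmix1 : F2 p (1, 0) (0, 1)
        = βt t s (f p) + fderiv ℝ (β t s) (f p) (α t s (f p)) := by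
      have hc1 : HasDerivAt (fun t' => fderiv ℝ f (t', s)) (F2 p (1, 0)) t :=
        (hfd.differentiable (by simp) p).hasFDerivAt.comp_hasDerivAt t
          ((hasDerivAt_id t).prodMk (hasDerivAt_const t s))
      have hev : HasDerivAt (fun t' => fderiv ℝ f (t', s) ((0:ℝ), (1:ℝ)))
          (F2 p (1, 0) (0, 1)) t :=
        (ContinuousLinearMap.apply ℝ E ((0:ℝ), (1:ℝ))).hasFDerivAt.comp_hasDerivAt t hc1
      have heq : (fun t' => fderiv ℝ f (t', s) ((0:ℝ), (1:ℝ)))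
          = fun t' => β t' s (Φ t' s x) := by
        funext t'; exact hB (t', s)
      rw [heq] at hev
      have hother : HasDerivAt (fun t' => β t' s (Φ t' s x))
          (βt t s (Φ t s x) + fderiv ℝ (β t s) (Φ t s x) (α t s (Φ t s x))) t := by
        exact chain_aux (fun r y => β r s y) (fun r y => βt r s y)
          (fun t' => Φ t' s x) (α t s (Φ t s x)) t
          (hβsmooth.comp (ContDiff.prodMk contDiff_fst (ContDiff.prodMk contDiff_const contDiff_snd)))
          (fun r y => hβt r s y) (hflow t s x)
      exact hev.unique hother
    -- mixed partial 2 : d/ds of (d/dt f) = αs + Dα(β)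
    have hmix2 : F2 p (0, 1) (1, 0)
        = αs t s (f p) + fderiv ℝ (α t s) (f p) (β t s (f p)) := by
      have hc1 : HasDerivAt (fun u => fderiv ℝ f (t, u)) (F2 p (0, 1)) s :=
        (hfd.differentiable (by simp) p).hasFDerivAt.comp_hasDerivAt s
          ((hasDerivAt_const s t).prodMk (hasDerivAt_id s))
      have hev : HasDerivAt (fun u => fderiv ℝ f (t, u) ((1:ℝ), (0:ℝ)))
          (F2 p (0, 1) (1, 0)) s :=
        (ContinuousLinearMap.apply ℝ E ((1:ℝ), (0:ℝ))).hasFDerivAt.comp_hasDerivAt s hc1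
      have heq : (fun u => fderiv ℝ f (t, u) ((1:ℝ), (0:ℝ)))
          = fun u => α t u (Φ t u x) := by
        funext u; exact hA (t, u)
      rw [heq] at hev
      have hother : HasDerivAt (fun u => α t u (Φ t u x))
          (αs t s (Φ t s x) + fderiv ℝ (α t s) (Φ t s x) (β t s (Φ t s x))) s := by
        exact chain_aux (fun r y => α t r y) (fun r y => αs t r y)
          (fun u => Φ t u x) (β t s (Φ t s x)) s
          (hα.comp (ContDiff.prodMk contDiff_const (ContDiff.prodMk contDiff_fst contDiff_snd)))
          (fun r y => hαs t r y) (hβ t s x)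
      exact hev.unique hother
    have hsym : F2 p (1, 0) (0, 1) = F2 p (0, 1) (1, 0) :=
      (hf.contDiffAt.isSymmSndFDerivAt (by simp; exact WithTop.coe_le_coe.mpr le_top)) _ _
    have hfp : f p = y := hx
    rw [hmix1, hmix2, hfp] at hsym
    rw [sub_eq_sub_iff_add_eq_add, ← hsym]; abel
  · intro s x
    have h1 : HasDerivAt (fun u => Φ 0 u x) (β 0 s (Φ 0 s x)) s := hβ 0 s x
    have h2 : (fun u => Φ 0 u x) = fun _ => x := funext fun u => hΦ0 u x
    rw [h2] at h1
    have := h1.unique (hasDerivAt_const s x)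
    rwa [hΦ0 s x] at this
end

section
/- Let f : ℝ → ℝ be smooth with f(x) = 0 for x ≤ 0 and f(x) > 0 for x > 0. Consider the submodule F = f·C^∞(ℝ) of C^∞(ℝ) generated by f. Then the family X(t) := (x ↦ f(x − t²)) does NOT locally factor through F with smooth coefficients: there is no neighborhood U of t = 0 and smooth c : U × ℝ → ℝ with f(x − t²) = c(t,x)·f(x) for all t ∈ U, x ∈ ℝ. -/
/-- Example `bad.diffeology`: Let `f : ℝ → ℝ` be smooth with `f x = 0` for
`x ≤ 0` and `f x > 0` for `x > 0`, and let `F = f·C^∞(ℝ)` be the submodule generated by `f`.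
Then the family `X(t) = (x ↦ f (x − t²))` does NOT locally factor through `F` with smooth
coefficients: there is no neighborhood `U` of `t = 0` and smooth `c : U × ℝ → ℝ` with
`f (x − t²) = c t x * f x` for all `t ∈ U`, `x ∈ ℝ`. -/
theorem bad_diffeology_example
    (f : ℝ → ℝ) (hf : ContDiff ℝ (⊤ : ℕ∞) f)
    (hf0 : ∀ x ≤ (0 : ℝ), f x = 0) (hfpos : ∀ x : ℝ, 0 < x → 0 < f x) :
    ¬ ∃ U ∈ nhds (0 : ℝ), ∃ c : ℝ → ℝ → ℝ,
        ContDiffOn ℝ (⊤ : ℕ∞) (fun p : ℝ × ℝ => c p.1 p.2) (U ×ˢ Set.univ) ∧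
        ∀ t ∈ U, ∀ x : ℝ, f (x - t ^ 2) = c t x * f x := by
  rintro ⟨U, hU, c, hc, heq⟩
  have h0U : (0 : ℝ) ∈ U := mem_of_mem_nhds hU
  have hcont : ContinuousAt (fun p : ℝ × ℝ => c p.1 p.2) (0, 0) := by
    refine hc.continuousOn.continuousAt ?_
    rw [nhds_prod_eq]
    exact Filter.prod_mem_prod hU Filter.univ_mem
  -- c 0 x = 1 for x > 0
  have h1 : ∀ x : ℝ, 0 < x → c 0 x = 1 := by
    intro x hx
    have h := heq 0 h0U x
    simp only [ne_eq, OfNat.ofNat_ne_zero, not_false_eq_true, zero_pow, sub_zero] at h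
    have hfx := hfpos x hx
    have : c 0 x * f x = 1 * f x := by linarith [h]
    exact mul_right_cancel₀ (ne_of_gt hfx) this
  -- c t (t²/2) = 0 for t ∈ U, t ≠ 0
  have h2 : ∀ t : ℝ, t ∈ U → t ≠ 0 → c t (t ^ 2 / 2) = 0 := by
    intro t ht htne
    have hx : 0 < t ^ 2 / 2 := by positivity
    have h := heq t ht (t ^ 2 / 2)
    have hz : f (t ^ 2 / 2 - t ^ 2) = 0 := hf0 _ (by nlinarith [sq_nonneg t])
    rw [hz] at h
    have hfx := hfpos _ hx
    have := h.symm
    rcases mul_eq_zero.mp this with h' | h'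
    · exact h'
    · exact absurd h' (ne_of_gt hfx)
  -- limit along (0, x), x → 0⁺ gives c 0 0 = 1
  have hne : (nhdsWithin (0:ℝ) (Set.Ioi 0)).NeBot := inferInstance
  have lim1 : Filter.Tendsto (fun x : ℝ => c 0 x) (nhdsWithin 0 (Set.Ioi 0)) (nhds (c 0 0)) := by
    have hmap : Filter.Tendsto (fun x : ℝ => ((0:ℝ), x)) (nhdsWithin 0 (Set.Ioi 0)) (nhds ((0:ℝ), (0:ℝ))) := by
      rw [nhds_prod_eq]
      apply Filter.Tendsto.prodMk
      · exact tendsto_const_nhds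
      · exact nhdsWithin_le_nhds
    exact hcont.tendsto.comp hmap
  have c001 : c 0 0 = 1 := by
    have : Filter.Tendsto (fun x : ℝ => c 0 x) (nhdsWithin 0 (Set.Ioi 0)) (nhds 1) := by
      apply Filter.Tendsto.congr' _ tendsto_const_nhds
      filter_upwards [self_mem_nhdsWithin] with x hx
      exact (h1 x hx).symm
    exact tendsto_nhds_unique lim1 this
  -- limit along (t, t²/2), t → 0⁺ gives c 0 0 = 0
  have lim2 : Filter.Tendsto (fun t : ℝ => c t (t ^ 2 / 2)) (nhdsWithin 0 (Set.Ioi 0)) (nhds (c 0 0)) := by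
    have hmap : Filter.Tendsto (fun t : ℝ => (t, t ^ 2 / 2)) (nhdsWithin 0 (Set.Ioi 0)) (nhds ((0:ℝ), (0:ℝ))) := by
      rw [nhds_prod_eq]
      apply Filter.Tendsto.prodMk
      · exact nhdsWithin_le_nhds
      · have : Filter.Tendsto (fun t : ℝ => t ^ 2 / 2) (nhds 0) (nhds ((0:ℝ)^2/2)) := by
          exact (continuous_pow 2).div_const 2 |>.tendsto 0
        simpa using this.mono_left nhdsWithin_le_nhds
    exact hcont.tendsto.comp hmap
  have c000 : c 0 0 = 0 := by
    have : Filter.Tendsto (fun t : ℝ => c t (t ^ 2 / 2)) (nhdsWithin 0 (Set.Ioi 0)) (nhds 0) := by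
      apply Filter.Tendsto.congr' _ tendsto_const_nhds
      have hUev : ∀ᶠ t in nhdsWithin (0:ℝ) (Set.Ioi 0), t ∈ U :=
        Filter.eventually_iff_exists_mem.mpr ⟨U, nhdsWithin_le_nhds hU, fun t ht => ht⟩
      filter_upwards [hUev, self_mem_nhdsWithin] with t htU ht
      exact (h2 t htU (ne_of_gt ht)).symm
    exact tendsto_nhds_unique lim2 this
  rw [c001] at c000
  norm_num at c000
end
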